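/- Let β satisfy the Lamé equations, ξ_i : ℝ^N → ℝ^M and ζ_i : ℝ^N → ℝ^P solve the direct system, define ξ*_i and ζ*_i by the Ribaucour prescription ξ*_i = (∂ξ_i/∂u_i + Σ_{k≠i}ξ_kβ_{ki})ᵀ (similarly ζ*_i), and suppose the potentials satisfy the symmetry constraints Ω(ξ,ζ*) + Ω(ζ,ξ*)ᵀ = Σ_k ξ_k ⊗ ζ_kᵀ and Ω(ξ,ξ*) + Ω(ξ,ξ*)ᵀ = Σ_k ξ_k ⊗ ξ_kᵀ, with Ω(ξ,ξ*) invertible. Then the transformed quantities ζ̂_i := ζ_i − Ω(ζ,ξ*)Ω(ξ,ξ*)^{-1}ξ_i, ζ̂*_i := ζ*_i − ξ*_i Ω(ξ,ξ*)^{-1}Ω(ξ,ζ*), and β̂_{ki} := β_{ki} − ⟨ξ*_i, Ω(ξ,ξ*)^{-1}ξ_k⟩ satisfy ζ̂*_i = (∂ζ̂_i/∂u_i + Σ_{k≠i} ζ̂_k β̂_{ki})ᵀ. -/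

import Mathlib

open scoped BigOperators

/-- Partial derivative of a scalar function on `ℝ^N` in the `i`-th coordinate direction. -/
noncomputable def pd {N : ℕ} (i : Fin N) (f : (Fin N → ℝ) → ℝ) (u : Fin N → ℝ) : ℝ :=
  fderiv ℝ f u (Pi.single i 1)


lemma pd_const {N : ℕ} (i : Fin N) (c : ℝ) (u : Fin N → ℝ) : pd i (fun _ => c) u = 0 := by
  simp [pd]

lemma pd_sub {N : ℕ} (i : Fin N) {f g : (Fin N → ℝ) → ℝ} {u : Fin N → ℝ}
    (hf : DifferentiableAt ℝ f u) (hg : DifferentiableAt ℝ g u) :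
    pd i (fun v => f v - g v) u = pd i f u - pd i g u := by
  simp [pd, fderiv_fun_sub hf hg]

lemma pd_mul {N : ℕ} (i : Fin N) {f g : (Fin N → ℝ) → ℝ} {u : Fin N → ℝ}
    (hf : DifferentiableAt ℝ f u) (hg : DifferentiableAt ℝ g u) :
    pd i (fun v => f v * g v) u = pd i f u * g u + f u * pd i g u := by
  simp [pd, fderiv_fun_mul hf hg, smul_eq_mul]; ring

lemma pd_sum {N : ℕ} (i : Fin N) {κ : Type*} (s : Finset κ) {f : κ → (Fin N → ℝ) → ℝ}
    {u : Fin N → ℝ} (hf : ∀ k ∈ s, DifferentiableAt ℝ (f k) u) :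
    pd i (fun v => ∑ k ∈ s, f k v) u = ∑ k ∈ s, pd i (f k) u := by
  simp [pd, fderiv_fun_sum hf]


lemma sum_split {N : ℕ} (i : Fin N) (f : Fin N → ℝ) :
    ∑ k, f k = f i + ∑ k ∈ Finset.univ.filter (fun k => k ≠ i), f k := by
  rw [show (Finset.univ.filter (fun k => k ≠ i)) = Finset.univ.erase i by
        ext k; simp [Finset.mem_erase, and_comm]]
  exact (Finset.add_sum_erase _ f (Finset.mem_univ i)).symm

lemma core {N M : ℕ} (i : Fin N)
    (A W : Fin M → Fin M → ℝ) (x : Fin N → Fin M → ℝ) (xs : Fin M → ℝ)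
    (z : Fin N → ℝ) (βv : Fin N → ℝ) (Z Y : Fin M → ℝ) (zs : ℝ)
    (hY : ∀ c, Y c + Z c = ∑ k, x k c * z k)
    (hW : ∀ a c, W a c + W c a = ∑ k, x k a * x k c)
    (h2 : ∀ a b, ∑ c, A a c * W c b = if a = b then 1 else 0) :
    zs - ∑ a, ∑ c, xs a * A a c * Y c
      = (zs - ∑ k ∈ Finset.univ.filter (fun k => k ≠ i), z k * βv k
          - ∑ a, ∑ c,
            ( z i * xs a * A a c * x i c
            + Z a * (-((∑ d, A a d * x i d) * (∑ e, xs e * A e c))) * x i c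
            + Z a * A a c * (xs c - ∑ k ∈ Finset.univ.filter (fun k => k ≠ i), x k c * βv k)))
      + ∑ k ∈ Finset.univ.filter (fun k => k ≠ i),
          (z k - ∑ a, ∑ c, Z a * A a c * x k c) * (βv k - ∑ a, ∑ c, xs a * A a c * x k c) := by
  classical
  set R : Fin M → ℝ := fun c => ∑ a, xs a * A a c with hR
  set Pp : Fin M → ℝ := fun c => ∑ a, Z a * A a c with hP
  -- generic swaps
  have col : ∀ (w g : Fin M → ℝ),
      (∑ a, ∑ c, w a * A a c * g c) = ∑ c, (∑ a, w a * A a c) * g c := by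
    intro w g
    rw [Finset.sum_comm]
    exact Finset.sum_congr rfl fun c _ => by rw [Finset.sum_mul]
  have sw : ∀ (w : Fin M → ℝ) (B : Fin M → Fin M → ℝ) (g : Fin M → ℝ),
      (∑ c, (∑ a, w a * B a c) * g c) = ∑ a, w a * (∑ c, B a c * g c) := by
    intro w B g
    simp only [Finset.sum_mul, Finset.mul_sum]
    rw [Finset.sum_comm]
    exact Finset.sum_congr rfl fun a _ => Finset.sum_congr rfl fun c _ => mul_assoc _ _ _
  have hRk : ∀ k, (∑ a, ∑ c, xs a * A a c * x k c) = ∑ c, R c * x k c :=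
    fun k => col xs (x k)
  have hPk : ∀ k, (∑ a, ∑ c, Z a * A a c * x k c) = ∑ c, Pp c * x k c :=
    fun k => col Z (x k)
  -- key facts from the inverse identities
  have f1 : ∀ c, (∑ d, R d * W d c) = xs c := by
    intro c
    rw [show (∑ d, R d * W d c) = ∑ a, xs a * (∑ d, A a d * W d c) from sw xs A (fun d => W d c)]
    simp [h2, Finset.sum_ite_eq']
  have f2 : ∀ d, (∑ c, Pp c * W c d) = Z d := by
    intro d
    rw [show (∑ c, Pp c * W c d) = ∑ a, Z a * (∑ c, A a c * W c d) from sw Z A (fun c => W c d)]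
    simp [h2, Finset.sum_ite_eq']
  -- middle derivative term
  have hmid : (∑ a, ∑ c, Z a * (-((∑ d, A a d * x i d) * (∑ e, xs e * A e c))) * x i c)
      = -((∑ d, Pp d * x i d) * (∑ c, R c * x i c)) := by
    have swp : (∑ d, Pp d * x i d) = ∑ a, Z a * (∑ d, A a d * x i d) := sw Z A (x i)
    have step : ∀ a, (∑ c, Z a * (-((∑ d, A a d * x i d) * (∑ e, xs e * A e c))) * x i c)
        = (-(Z a * (∑ d, A a d * x i d))) * (∑ c, R c * x i c) := by
      intro a
      rw [Finset.mul_sum]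
      exact Finset.sum_congr rfl fun c _ => by simp only [hR]; ring
    rw [Finset.sum_congr rfl fun a _ => step a, ← Finset.sum_mul]
    rw [show (∑ a, -(Z a * (∑ d, A a d * x i d))) = -(∑ d, Pp d * x i d) by
          rw [Finset.sum_neg_distrib, swp]]
    ring
  -- third term
  have hthird : (∑ a, ∑ c, Z a * A a c * (xs c - ∑ k ∈ Finset.univ.filter (fun k => k ≠ i), x k c * βv k))
      = (∑ c, Pp c * xs c)
        - ∑ k ∈ Finset.univ.filter (fun k => k ≠ i), βv k * (∑ c, Pp c * x k c) := by
    rw [col Z _]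
    rw [show (∑ c, Pp c * (xs c - ∑ k ∈ Finset.univ.filter (fun k => k ≠ i), x k c * βv k))
        = ∑ c, (Pp c * xs c - ∑ k ∈ Finset.univ.filter (fun k => k ≠ i), Pp c * (x k c * βv k)) from
      Finset.sum_congr rfl fun c _ => by rw [mul_sub, Finset.mul_sum]]
    rw [Finset.sum_sub_distrib, Finset.sum_comm]
    congr 1
    exact Finset.sum_congr rfl fun k _ => by
      rw [Finset.mul_sum]
      exact Finset.sum_congr rfl fun c _ => by ring
  -- first term  z i * xs a * A a c * x i c
  have hfirst : (∑ a, ∑ c, z i * xs a * A a c * x i c) = z i * ∑ c, R c * x i c := by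
    rw [Finset.mul_sum, Finset.sum_comm]
    refine Finset.sum_congr rfl fun c _ => ?_
    simp only [hR, Finset.sum_mul, Finset.mul_sum]
    exact Finset.sum_congr rfl fun a _ => by ring
  -- K1 : expansion of ∑ R Y
  have K1 : (∑ c, R c * Y c) = (∑ k, z k * (∑ c, R c * x k c)) - ∑ c, R c * Z c := by
    have hYc : ∀ c, Y c = (∑ k, x k c * z k) - Z c := fun c => by linarith [hY c]
    calc (∑ c, R c * Y c)
        = ∑ c, ((∑ k, R c * (x k c * z k)) - R c * Z c) := by
          refine Finset.sum_congr rfl fun c _ => ?_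
          rw [hYc c, mul_sub, Finset.mul_sum]
      _ = (∑ c, ∑ k, R c * (x k c * z k)) - ∑ c, R c * Z c := Finset.sum_sub_distrib _ _
      _ = (∑ k, z k * (∑ c, R c * x k c)) - ∑ c, R c * Z c := by
          rw [Finset.sum_comm]
          congr 1
          exact Finset.sum_congr rfl fun k _ => by rw [Finset.mul_sum]; exact Finset.sum_congr rfl fun c _ => by ring
  -- K2
  have K2 : (∑ k, (∑ c, Pp c * x k c) * (∑ d, R d * x k d))
      = (∑ c, Pp c * xs c) + ∑ d, R d * Z d := by
    have expand : ∀ k : Fin N, (∑ c, Pp c * x k c) * (∑ d, R d * x k d)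
        = ∑ c, ∑ d, Pp c * R d * (x k c * x k d) := by
      intro k
      rw [Finset.sum_mul_sum]
      exact Finset.sum_congr rfl fun c _ => Finset.sum_congr rfl fun d _ => by ring
    rw [Finset.sum_congr rfl fun k _ => expand k, Finset.sum_comm]
    have inner : ∀ c, (∑ k : Fin N, ∑ d, Pp c * R d * (x k c * x k d))
        = ∑ d, Pp c * R d * (W c d + W d c) := by
      intro c
      rw [Finset.sum_comm]
      refine Finset.sum_congr rfl fun d _ => ?_
      rw [← Finset.mul_sum, ← hW c d]
    rw [Finset.sum_congr rfl fun c _ => inner c]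
    have split : (∑ c, ∑ d, Pp c * R d * (W c d + W d c))
        = (∑ c, ∑ d, Pp c * R d * W c d) + ∑ c, ∑ d, Pp c * R d * W d c := by
      rw [← Finset.sum_add_distrib]
      refine Finset.sum_congr rfl fun c _ => ?_
      rw [← Finset.sum_add_distrib]
      exact Finset.sum_congr rfl fun d _ => by ring
    have B1 : (∑ c, ∑ d, Pp c * R d * W c d) = ∑ d, R d * Z d := by
      rw [show (∑ c, ∑ d, Pp c * R d * W c d) = ∑ d, R d * (∑ c, Pp c * W c d) by
            rw [Finset.sum_comm]
            exact Finset.sum_congr rfl fun d _ => by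
              rw [Finset.mul_sum]
              exact Finset.sum_congr rfl fun c _ => by ring]
      exact Finset.sum_congr rfl fun d _ => by rw [f2 d]
    have B2 : (∑ c, ∑ d, Pp c * R d * W d c) = ∑ c, Pp c * xs c := by
      refine Finset.sum_congr rfl fun c _ => ?_
      rw [← f1 c, Finset.mul_sum]
      exact Finset.sum_congr rfl fun d _ => by ring
    rw [split, B1, B2]
    ring
  -- assemble
  have colY : (∑ a, ∑ c, xs a * A a c * Y c) = ∑ c, R c * Y c := col xs Y
  have bigsplit : (∑ a, ∑ c,
        ( z i * xs a * A a c * x i c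
        + Z a * (-((∑ d, A a d * x i d) * (∑ e, xs e * A e c))) * x i c
        + Z a * A a c * (xs c - ∑ k ∈ Finset.univ.filter (fun k => k ≠ i), x k c * βv k)))
      = (∑ a, ∑ c, z i * xs a * A a c * x i c)
      + (∑ a, ∑ c, Z a * (-((∑ d, A a d * x i d) * (∑ e, xs e * A e c))) * x i c)
      + (∑ a, ∑ c, Z a * A a c * (xs c - ∑ k ∈ Finset.univ.filter (fun k => k ≠ i), x k c * βv k)) := by
    simp only [Finset.sum_add_distrib]
  have exppr : (∑ k ∈ Finset.univ.filter (fun k => k ≠ i),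
        (z k - ∑ a, ∑ c, Z a * A a c * x k c) * (βv k - ∑ a, ∑ c, xs a * A a c * x k c))
      = (∑ k ∈ Finset.univ.filter (fun k => k ≠ i), z k * βv k)
        - (∑ k ∈ Finset.univ.filter (fun k => k ≠ i), z k * (∑ c, R c * x k c))
        - (∑ k ∈ Finset.univ.filter (fun k => k ≠ i), βv k * (∑ c, Pp c * x k c))
        + (∑ k ∈ Finset.univ.filter (fun k => k ≠ i), (∑ c, Pp c * x k c) * (∑ c, R c * x k c)) := by
    rw [show (∑ k ∈ Finset.univ.filter (fun k => k ≠ i),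
          (z k - ∑ a, ∑ c, Z a * A a c * x k c) * (βv k - ∑ a, ∑ c, xs a * A a c * x k c))
        = ∑ k ∈ Finset.univ.filter (fun k => k ≠ i),
            (z k * βv k - z k * (∑ c, R c * x k c) - βv k * (∑ c, Pp c * x k c)
              + (∑ c, Pp c * x k c) * (∑ c, R c * x k c)) from
      Finset.sum_congr rfl fun k _ => by rw [hPk k, hRk k]; ring]
    simp only [Finset.sum_add_distrib, Finset.sum_sub_distrib]
  have S1 := sum_split i (fun k => z k * (∑ c, R c * x k c))
  have S2 := sum_split i (fun k => (∑ c, Pp c * x k c) * (∑ d, R d * x k d))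
  rw [colY, bigsplit, hfirst, hmid, hthird, exppr]
  linarith [K1, K2, S1, S2]

theorem ribaucour_lemma3
    {N M P : ℕ}
    (β : Fin N → Fin N → (Fin N → ℝ) → ℝ)
    (ξ : Fin N → (Fin N → ℝ) → Fin M → ℝ)
    (ζ : Fin N → (Fin N → ℝ) → Fin P → ℝ)
    (ξs : Fin N → (Fin N → ℝ) → Fin M → ℝ)
    (ζs : Fin N → (Fin N → ℝ) → Fin P → ℝ)
    (Ωξζ : (Fin N → ℝ) → Fin M → Fin P → ℝ)
    (Ωζξ : (Fin N → ℝ) → Fin P → Fin M → ℝ)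
    (Ωξξ Ωinv : (Fin N → ℝ) → Fin M → Fin M → ℝ)
    (βh : Fin N → Fin N → (Fin N → ℝ) → ℝ)
    (ζh : Fin N → (Fin N → ℝ) → Fin P → ℝ)
    (ζhs : Fin N → (Fin N → ℝ) → Fin P → ℝ)
    (hβ : ∀ i j, i ≠ j → ContDiff ℝ (⊤ : ℕ∞) (β i j))
    (hξ : ∀ i a, ContDiff ℝ (⊤ : ℕ∞) (fun u => ξ i u a))
    (hζ : ∀ i b, ContDiff ℝ (⊤ : ℕ∞) (fun u => ζ i u b))
    (hΩξζsm : ∀ a b, ContDiff ℝ (⊤ : ℕ∞) (fun u => Ωξζ u a b))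
    (hΩζξsm : ∀ b a, ContDiff ℝ (⊤ : ℕ∞) (fun u => Ωζξ u b a))
    (hΩξξsm : ∀ a b, ContDiff ℝ (⊤ : ℕ∞) (fun u => Ωξξ u a b))
    (hΩinvsm : ∀ a b, ContDiff ℝ (⊤ : ℕ∞) (fun u => Ωinv u a b))
    -- Lamé equations
    (hLame1 : ∀ i j k, i ≠ j → j ≠ k → i ≠ k → ∀ u : Fin N → ℝ,
      pd k (β i j) u = β i k u * β k j u)
    (hLame2 : ∀ i j, i ≠ j → ∀ u : Fin N → ℝ,
      pd i (β i j) u + pd j (β j i) u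
        + ∑ k ∈ Finset.univ.filter (fun k => k ≠ i ∧ k ≠ j), β k i u * β k j u = 0)
    -- direct systems
    (hdirectξ : ∀ i j, i ≠ j → ∀ (u : Fin N → ℝ) (a : Fin M),
      pd i (fun v => ξ j v a) u = β j i u * ξ i u a)
    (hdirectζ : ∀ i j, i ≠ j → ∀ (u : Fin N → ℝ) (b : Fin P),
      pd i (fun v => ζ j v b) u = β j i u * ζ i u b)
    -- Ribaucour prescription for the adjoints
    (hξs : ∀ i (u : Fin N → ℝ) (a : Fin M),
      ξs i u a = pd i (fun v => ξ i v a) u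
        + ∑ k ∈ Finset.univ.filter (fun k => k ≠ i), ξ k u a * β k i u)
    (hζs : ∀ i (u : Fin N → ℝ) (b : Fin P),
      ζs i u b = pd i (fun v => ζ i v b) u
        + ∑ k ∈ Finset.univ.filter (fun k => k ≠ i), ζ k u b * β k i u)
    -- potentials
    (hΩξζ : ∀ i (u : Fin N → ℝ) (a : Fin M) (b : Fin P),
      pd i (fun v => Ωξζ v a b) u = ξ i u a * ζs i u b)
    (hΩζξ : ∀ i (u : Fin N → ℝ) (b : Fin P) (a : Fin M),
      pd i (fun v => Ωζξ v b a) u = ζ i u b * ξs i u a)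
    (hΩξξ : ∀ i (u : Fin N → ℝ) (a b : Fin M),
      pd i (fun v => Ωξξ v a b) u = ξ i u a * ξs i u b)
    -- symmetry constraints
    (hconstr₁ : ∀ (u : Fin N → ℝ) (a : Fin M) (b : Fin P),
      Ωξζ u a b + Ωζξ u b a = ∑ k, ξ k u a * ζ k u b)
    (hconstr₂ : ∀ (u : Fin N → ℝ) (a b : Fin M),
      Ωξξ u a b + Ωξξ u b a = ∑ k, ξ k u a * ξ k u b)
    -- invertibility of Ω(ξ,ξ*)
    (hinv₁ : ∀ (u : Fin N → ℝ) (a b : Fin M),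
      ∑ c, Ωξξ u a c * Ωinv u c b = if a = b then 1 else 0)
    (hinv₂ : ∀ (u : Fin N → ℝ) (a b : Fin M),
      ∑ c, Ωinv u a c * Ωξξ u c b = if a = b then 1 else 0)
    -- transformed quantities
    (hβh : ∀ k i (u : Fin N → ℝ),
      βh k i u = β k i u - ∑ a, ∑ b, ξs i u a * Ωinv u a b * ξ k u b)
    (hζh : ∀ i (u : Fin N → ℝ) (b : Fin P),
      ζh i u b = ζ i u b - ∑ a, ∑ c, Ωζξ u b a * Ωinv u a c * ξ i u c)
    (hζhs : ∀ i (u : Fin N → ℝ) (b : Fin P),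
      ζhs i u b = ζs i u b - ∑ a, ∑ c, ξs i u a * Ωinv u a c * Ωξζ u c b) :
    ∀ (i : Fin N) (u : Fin N → ℝ) (b : Fin P),
      ζhs i u b = pd i (fun v => ζh i v b) u
        + ∑ k ∈ Finset.univ.filter (fun k => k ≠ i), ζh k u b * βh k i u := by
  intro i u b
  classical
  -- differentiability facts
  have Dξ : ∀ j a, DifferentiableAt ℝ (fun v => ξ j v a) u :=
    fun j a => ((hξ j a).differentiable (by simp)).differentiableAt
  have Dζ : ∀ j c, DifferentiableAt ℝ (fun v => ζ j v c) u :=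
    fun j c => ((hζ j c).differentiable (by simp)).differentiableAt
  have DΩζξ : ∀ c a, DifferentiableAt ℝ (fun v => Ωζξ v c a) u :=
    fun c a => ((hΩζξsm c a).differentiable (by simp)).differentiableAt
  have DΩinv : ∀ a c, DifferentiableAt ℝ (fun v => Ωinv v a c) u :=
    fun a c => ((hΩinvsm a c).differentiable (by simp)).differentiableAt
  have DΩξξ : ∀ a c, DifferentiableAt ℝ (fun v => Ωξξ v a c) u :=
    fun a c => ((hΩξξsm a c).differentiable (by simp)).differentiableAt
  -- derivatives of ξ i and ζ i in direction i
  have pdξ : ∀ c, pd i (fun v => ξ i v c) u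
      = ξs i u c - ∑ k ∈ Finset.univ.filter (fun k => k ≠ i), ξ k u c * β k i u := by
    intro c; rw [hξs i u c]; ring
  have pdζi : pd i (fun v => ζ i v b) u
      = ζs i u b - ∑ k ∈ Finset.univ.filter (fun k => k ≠ i), ζ k u b * β k i u := by
    rw [hζs i u b]; ring
  -- derivative of the inverse matrix
  have pdinv : ∀ a c, pd i (fun v => Ωinv v a c) u
      = -((∑ d, Ωinv u a d * ξ i u d) * (∑ e, ξs i u e * Ωinv u e c)) := by
    intro a c
    have hz : ∀ a' b' : Fin M, (∑ c', Ωξξ u a' c' * pd i (fun v => Ωinv v c' b') u)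
        = -(ξ i u a' * (∑ c', ξs i u c' * Ωinv u c' b')) := by
      intro a' b'
      have h0 : pd i (fun v => ∑ c', Ωξξ v a' c' * Ωinv v c' b') u = 0 := by
        rw [show (fun v => ∑ c', Ωξξ v a' c' * Ωinv v c' b')
              = fun _ : Fin N → ℝ => (if a' = b' then (1:ℝ) else 0) from
            funext fun v => hinv₁ v a' b']
        exact pd_const i _ u
      have h1 : (∑ c', pd i (fun v => Ωξξ v a' c' * Ωinv v c' b') u) = 0 :=
        (pd_sum i Finset.univ (fun c' _ => (DΩξξ a' c').mul (DΩinv c' b'))).symm.trans h0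
      have per : ∀ c', pd i (fun v => Ωξξ v a' c' * Ωinv v c' b') u
          = ξ i u a' * ξs i u c' * Ωinv u c' b'
            + Ωξξ u a' c' * pd i (fun v => Ωinv v c' b') u := by
        intro c'
        have hm := pd_mul i (DΩξξ a' c') (DΩinv c' b')
        rw [hΩξξ i u a' c'] at hm
        exact hm
      have h2' : (∑ c', (ξ i u a' * ξs i u c' * Ωinv u c' b'
            + Ωξξ u a' c' * pd i (fun v => Ωinv v c' b') u)) = 0 := by
        rw [← Finset.sum_congr rfl fun c' _ => per c']; exact h1
      rw [Finset.sum_add_distrib] at h2'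
      have h3 : (∑ c', ξ i u a' * ξs i u c' * Ωinv u c' b')
          = ξ i u a' * (∑ c', ξs i u c' * Ωinv u c' b') := by
        rw [Finset.mul_sum]; exact Finset.sum_congr rfl fun c' _ => by ring
      rw [h3] at h2'
      linarith
    calc pd i (fun v => Ωinv v a c) u
        = ∑ a', (if a = a' then (1:ℝ) else 0) * pd i (fun v => Ωinv v a' c) u := by
          simp [ite_mul, Finset.sum_ite_eq]
      _ = ∑ a', (∑ d, Ωinv u a d * Ωξξ u d a') * pd i (fun v => Ωinv v a' c) u := by
          refine Finset.sum_congr rfl fun a' _ => ?_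
          rw [hinv₂ u a a']
      _ = ∑ d, Ωinv u a d * (∑ a', Ωξξ u d a' * pd i (fun v => Ωinv v a' c) u) := by
          simp only [Finset.sum_mul]
          rw [Finset.sum_comm]
          refine Finset.sum_congr rfl fun d _ => ?_
          rw [Finset.mul_sum]
          exact Finset.sum_congr rfl fun a' _ => by ring
      _ = ∑ d, Ωinv u a d * (-(ξ i u d * (∑ e, ξs i u e * Ωinv u e c))) := by
          exact Finset.sum_congr rfl fun d _ => by rw [hz d c]
      _ = -((∑ d, Ωinv u a d * ξ i u d) * (∑ e, ξs i u e * Ωinv u e c)) := by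
          rw [show (∑ d, Ωinv u a d * (-(ξ i u d * (∑ e, ξs i u e * Ωinv u e c))))
              = ∑ d, -(Ωinv u a d * ξ i u d * (∑ e, ξs i u e * Ωinv u e c)) from
            Finset.sum_congr rfl fun d _ => by ring]
          rw [Finset.sum_neg_distrib, ← Finset.sum_mul]
  -- derivative of ζh i
  have Dbig : DifferentiableAt ℝ (fun v => ∑ a, ∑ c, Ωζξ v b a * Ωinv v a c * ξ i v c) u :=
    DifferentiableAt.fun_sum fun a _ =>
      DifferentiableAt.fun_sum fun c _ => ((DΩζξ b a).mul (DΩinv a c)).mul (Dξ i c)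
  have key : pd i (fun v => ζh i v b) u
      = pd i (fun v => ζ i v b) u
        - ∑ a, ∑ c,
            ( ζ i u b * ξs i u a * Ωinv u a c * ξ i u c
            + Ωζξ u b a * (-((∑ d, Ωinv u a d * ξ i u d) * (∑ e, ξs i u e * Ωinv u e c))) * ξ i u c
            + Ωζξ u b a * Ωinv u a c
                * (ξs i u c - ∑ k ∈ Finset.univ.filter (fun k => k ≠ i), ξ k u c * β k i u)) := by
    rw [show (fun v => ζh i v b)
          = fun v => ζ i v b - ∑ a, ∑ c, Ωζξ v b a * Ωinv v a c * ξ i v c from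
        funext fun v => hζh i v b]
    rw [pd_sub i (Dζ i b) Dbig]
    congr 1
    refine (pd_sum i Finset.univ (fun a _ =>
      DifferentiableAt.fun_sum fun c _ => ((DΩζξ b a).fun_mul (DΩinv a c)).fun_mul (Dξ i c))).trans ?_
    refine Finset.sum_congr rfl fun a _ => ?_
    refine (pd_sum i Finset.univ
      (fun c _ => ((DΩζξ b a).fun_mul (DΩinv a c)).fun_mul (Dξ i c))).trans ?_
    refine Finset.sum_congr rfl fun c _ => ?_
    have hm1 := pd_mul i ((DΩζξ b a).fun_mul (DΩinv a c)) (Dξ i c)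
    have hm2 := pd_mul i (DΩζξ b a) (DΩinv a c)
    rw [hm1, hm2, hΩζξ i u b a, pdinv a c, pdξ c]
    ring
  -- assemble via the core algebraic identity
  have hlast : (∑ k ∈ Finset.univ.filter (fun k => k ≠ i), ζh k u b * βh k i u)
      = ∑ k ∈ Finset.univ.filter (fun k => k ≠ i),
          (ζ k u b - ∑ a, ∑ c, Ωζξ u b a * Ωinv u a c * ξ k u c)
            * (β k i u - ∑ a, ∑ c, ξs i u a * Ωinv u a c * ξ k u c) :=
    Finset.sum_congr rfl fun k _ => by rw [hζh k u b, hβh k i u]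
  rw [hζhs i u b, key, pdζi, hlast]
  exact core i (Ωinv u) (Ωξξ u) (fun k => ξ k u) (ξs i u) (fun k => ζ k u b)
    (fun k => β k i u) (fun a => Ωζξ u b a) (fun c => Ωξζ u c b) (ζs i u b)
    (fun c => hconstr₁ u c b) (fun a c => hconstr₂ u a c) (fun a c => hinv₂ u a c)
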